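/- Let α ∈ ℝ and c ∈ ℝ with c ≠ 0, and let q_w be the rogue wave q_w(x,t) = c·(−64c²α²t² − 16c⁴t² − 32c²αxt + 16ic²t − 4c²x² + 3)·exp(−2i(2α²t − c²t + αx)) / (64α²c²t² + 16c⁴t² + 32αc²tx + 4c²x² + 1). Then |q_w(x,t)|² → c² as x² + t² → ∞; that is, for every ε > 0 there exists M > 0 such that x² + t² > M implies ||q_w(x,t)|² − c²| < ε. (The rogue wave is localized: it decays to the constant background amplitude |c| in every direction of the (x,t)-plane.) -/

import Mathlib

/-!
Write `D = 4c²(x + 4αt)² + 16c⁴t² + 1` for the denominator of `q_w`. The exponential factor has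
modulus one and the numerator has real part `4 - D` and imaginary part `16c²t`, so
`|q_w|² - c² = c²(16 - 8D + 256c⁴t²) / D²`. Since `256c⁴t² ≤ 16(D - 1)`, this is at most `8c²/D`
in absolute value. Finally, for `c ≠ 0` the quadratic form `D - 1` is positive definite, so `D`
grows at least like a multiple of `x² + t²`.
-/

open Complex

/-- Partial derivative in `x` of a function of `(x,t)`. -/
noncomputable def pX (f : ℝ → ℝ → ℂ) : ℝ → ℝ → ℂ := fun x t => deriv (fun x' => f x' t) x

/-- Partial derivative in `t` of a function of `(x,t)`. -/
noncomputable def pT (f : ℝ → ℝ → ℂ) : ℝ → ℝ → ℂ := fun x t => deriv (fun t' => f x t') t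

/-- The rogue wave
`q_w(x,t) = c(−64c²α²t² − 16c⁴t² − 32c²αxt + 16ic²t − 4c²x² + 3) e^{−2i(2α²t − c²t + αx)}
  / (64α²c²t² + 16c⁴t² + 32αc²tx + 4c²x² + 1)`. -/
noncomputable def rogueWave (α c : ℝ) : ℝ → ℝ → ℂ := fun x t =>
  (c : ℂ) * (-64 * (c : ℂ) ^ 2 * (α : ℂ) ^ 2 * (t : ℂ) ^ 2 - 16 * (c : ℂ) ^ 4 * (t : ℂ) ^ 2
      - 32 * (c : ℂ) ^ 2 * (α : ℂ) * (x : ℂ) * (t : ℂ) + 16 * I * (c : ℂ) ^ 2 * (t : ℂ)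
      - 4 * (c : ℂ) ^ 2 * (x : ℂ) ^ 2 + 3)
    * Complex.exp (-2 * I * ((2 * α ^ 2 * t - c ^ 2 * t + α * x : ℝ) : ℂ))
    / ((64 * α ^ 2 * c ^ 2 * t ^ 2 + 16 * c ^ 4 * t ^ 2 + 32 * α * c ^ 2 * t * x
        + 4 * c ^ 2 * x ^ 2 + 1 : ℝ) : ℂ)

-- The difference of the two sides is `(a(x + kt))² + (ak(x + kt) + bt)²`.
lemma mul_mul_sq_add_sq_le (a b k x t : ℝ) :
    a * b * (x ^ 2 + t ^ 2) ≤ (a * (1 + k ^ 2) + b) * (a * (x + k * t) ^ 2 + b * t ^ 2) := by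
  nlinarith [sq_nonneg (a * (x + k * t)), sq_nonneg (a * k * (x + k * t) + b * t)]

noncomputable def rogueWaveDenom (α c x t : ℝ) : ℝ :=
  64 * α ^ 2 * c ^ 2 * t ^ 2 + 16 * c ^ 4 * t ^ 2 + 32 * α * c ^ 2 * t * x + 4 * c ^ 2 * x ^ 2 + 1

section RogueWave

variable (α c x t : ℝ)

lemma rogueWaveDenom_eq :
    rogueWaveDenom α c x t = 4 * c ^ 2 * (x + 4 * α * t) ^ 2 + 16 * c ^ 4 * t ^ 2 + 1 := by
  unfold rogueWaveDenom
  ring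

lemma one_le_rogueWaveDenom : 1 ≤ rogueWaveDenom α c x t := by
  rw [rogueWaveDenom_eq]
  nlinarith [sq_nonneg (c * (x + 4 * α * t)), sq_nonneg (c ^ 2 * t)]

lemma norm_rogueWave_sq :
    ‖rogueWave α c x t‖ ^ 2 =
      c ^ 2 * ((4 - rogueWaveDenom α c x t) ^ 2 + (16 * c ^ 2 * t) ^ 2)
        / rogueWaveDenom α c x t ^ 2 := by
  set D := rogueWaveDenom α c x t with hD
  have hnum : (-64 * (c : ℂ) ^ 2 * (α : ℂ) ^ 2 * (t : ℂ) ^ 2 - 16 * (c : ℂ) ^ 4 * (t : ℂ) ^ 2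
      - 32 * (c : ℂ) ^ 2 * (α : ℂ) * (x : ℂ) * (t : ℂ) + 16 * I * (c : ℂ) ^ 2 * (t : ℂ)
      - 4 * (c : ℂ) ^ 2 * (x : ℂ) ^ 2 + 3) = ((4 - D : ℝ) : ℂ) + ((16 * c ^ 2 * t : ℝ) : ℂ) * I := by
    rw [hD, rogueWaveDenom]
    push_cast
    ring
  have hphase : -2 * I * ((2 * α ^ 2 * t - c ^ 2 * t + α * x : ℝ) : ℂ)
      = ((-2 * (2 * α ^ 2 * t - c ^ 2 * t + α * x) : ℝ) : ℂ) * I := by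
    push_cast
    ring
  rw [rogueWave, ← rogueWaveDenom, ← hD, hnum, hphase, norm_div, norm_mul, norm_mul,
    norm_exp_ofReal_mul_I, mul_one, div_pow, mul_pow, norm_real, norm_real, Real.norm_eq_abs,
    Real.norm_eq_abs, sq_abs, sq_abs, Complex.sq_norm, normSq_add_mul_I]

lemma abs_norm_rogueWave_sq_sub_le :
    |‖rogueWave α c x t‖ ^ 2 - c ^ 2| ≤ 8 * c ^ 2 / rogueWaveDenom α c x t := by
  have hD1 := one_le_rogueWaveDenom α c x t
  set D := rogueWaveDenom α c x t with hD
  have hsub : ‖rogueWave α c x t‖ ^ 2 - c ^ 2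
      = c ^ 2 * (16 - 8 * D + (16 * c ^ 2 * t) ^ 2) / D ^ 2 := by
    rw [norm_rogueWave_sq, ← hD]
    field_simp
    ring
  have hnum : |16 - 8 * D + (16 * c ^ 2 * t) ^ 2| ≤ 8 * D := by
    have ht : (16 * c ^ 2 * t) ^ 2 ≤ 16 * (D - 1) := by
      rw [hD, rogueWaveDenom_eq]
      nlinarith [sq_nonneg (c * (x + 4 * α * t))]
    exact abs_le.2 ⟨by nlinarith [sq_nonneg (16 * c ^ 2 * t)], by linarith⟩
  calc |‖rogueWave α c x t‖ ^ 2 - c ^ 2|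
      = c ^ 2 * |16 - 8 * D + (16 * c ^ 2 * t) ^ 2| / D ^ 2 := by
        rw [hsub, abs_div, abs_mul, abs_sq, abs_sq]
    _ ≤ c ^ 2 * (8 * D) / D ^ 2 := by gcongr
    _ = 8 * c ^ 2 / D := by field_simp

lemma mul_sq_add_sq_le_rogueWaveDenom :
    64 * c ^ 6 * (x ^ 2 + t ^ 2)
      ≤ (4 * c ^ 2 * (1 + (4 * α) ^ 2) + 16 * c ^ 4) * (rogueWaveDenom α c x t - 1) := by
  have h := mul_mul_sq_add_sq_le (4 * c ^ 2) (16 * c ^ 4) (4 * α) x t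
  rw [rogueWaveDenom_eq]
  convert h using 2 <;> ring

end RogueWave

/-- the rogue wave is localized: `|q_w(x,t)|² → c²` as `x² + t² → ∞`, i.e.
for every `ε > 0` there is `M > 0` such that `x² + t² > M` implies `||q_w|² − c²| < ε`. -/
theorem statement16 (α c : ℝ) (hc : c ≠ 0) :
    ∀ ε : ℝ, 0 < ε → ∃ M : ℝ, 0 < M ∧
      ∀ x t : ℝ, x ^ 2 + t ^ 2 > M →
        |‖rogueWave α c x t‖ ^ 2 - c ^ 2| < ε := by
  intro ε hε
  set K := 4 * c ^ 2 * (1 + (4 * α) ^ 2) + 16 * c ^ 4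
  have hK : 0 < K := by positivity
  refine ⟨K / (8 * ε * c ^ 4), by positivity, fun x t hxt => ?_⟩
  have hD1 := one_le_rogueWaveDenom α c x t
  have hlarge : 8 * c ^ 2 < ε * (rogueWaveDenom α c x t - 1) := by
    rw [gt_iff_lt, div_lt_iff₀ (by positivity)] at hxt
    refine lt_of_mul_lt_mul_left ?_ hK.le
    calc K * (8 * c ^ 2) < (x ^ 2 + t ^ 2) * (8 * ε * c ^ 4) * (8 * c ^ 2) :=
          mul_lt_mul_of_pos_right hxt (by positivity)
      _ = ε * (64 * c ^ 6 * (x ^ 2 + t ^ 2)) := by ring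
      _ ≤ ε * (K * (rogueWaveDenom α c x t - 1)) :=
          mul_le_mul_of_nonneg_left (mul_sq_add_sq_le_rogueWaveDenom α c x t) hε.le
      _ = K * (ε * (rogueWaveDenom α c x t - 1)) := by ring
  calc |‖rogueWave α c x t‖ ^ 2 - c ^ 2| ≤ 8 * c ^ 2 / rogueWaveDenom α c x t :=
        abs_norm_rogueWave_sq_sub_le α c x t
    _ < ε := by rw [div_lt_iff₀ (by positivity)]; linarith
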